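/- Let S be an idempotent commutative semiring and M a pointed set. If elements {f_i} of the free S-module M⊗S generate an S-submodule N, then the module congruence B(N) generated by all bend relations of all elements of N equals the module congruence generated by the union of the B(f_i). -/

import Mathlib

/-- A module congruence on an `S`-module `N`: an equivalence relation closed under
addition and scalar multiplication. -/
def IsModCong (S N : Type*) [Semiring S] [AddCommMonoid N] [Module S N]
    (r : N → N → Prop) : Prop :=
  Equivalence r ∧ (∀ a b c d : N, r a b → r c d → r (a + c) (b + d)) ∧
    (∀ (s : S) (a b : N), r a b → r (s • a) (s • b))

/-- The module congruence generated by a set of pairs. -/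
def modCongGen (S N : Type*) [Semiring S] [AddCommMonoid N] [Module S N]
    (p : N → N → Prop) : N → N → Prop :=
  fun x y => ∀ r : N → N → Prop, IsModCong S N r → (∀ a b, p a b → r a b) → r x y

/-- The bend relations of `f ∈ M ⊗ S`. -/
def bendPairs {S M : Type*} [Zero S] (f : M →₀ S) : (M →₀ S) → (M →₀ S) → Prop :=
  fun x y => ∃ a ∈ f.support, x = f ∧ y = Finsupp.erase a f

/-! Deleting the `a`-coordinate is `S`-linear, so the elements `g` with `g ∼ g_â` for every `a`
form a submodule for any module congruence `∼`. If `∼` contains the bend relations of the `f i`,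
this submodule contains their span `N`, hence `∼` contains all bend relations of `N`. -/

section ModCong

variable {S N : Type*} [Semiring S] [AddCommMonoid N] [Module S N]

lemma isModCong_modCongGen (p : N → N → Prop) : IsModCong S N (modCongGen S N p) :=
  ⟨⟨fun x _ hr _ => hr.1.refl x,
    fun h r hr hp => hr.1.symm (h r hr hp),
    fun h₁ h₂ r hr hp => hr.1.trans (h₁ r hr hp) (h₂ r hr hp)⟩,
    fun a b c d h₁ h₂ r hr hp => hr.2.1 a b c d (h₁ r hr hp) (h₂ r hr hp),
    fun s a b h r hr hp => hr.2.2 s a b (h r hr hp)⟩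

lemma le_modCongGen (p : N → N → Prop) : p ≤ modCongGen S N p :=
  fun _ _ h _ _ hp => hp _ _ h

lemma modCongGen_le {p r : N → N → Prop} (hr : IsModCong S N r) (hp : p ≤ r) :
    modCongGen S N p ≤ r :=
  fun _ _ h => h r hr hp

lemma modCongGen_eq_of_le {p q : N → N → Prop} (hpq : p ≤ modCongGen S N q)
    (hqp : q ≤ modCongGen S N p) : modCongGen S N p = modCongGen S N q :=
  le_antisymm (modCongGen_le (isModCong_modCongGen q) hpq)
    (modCongGen_le (isModCong_modCongGen p) hqp)

end ModCong

lemma Finsupp.erase_smul {α R M : Type*} [Zero M] [SMulZeroClass R M] (a : α) (s : R)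
    (f : α →₀ M) : (s • f).erase a = s • f.erase a := by
  ext b
  by_cases hb : b = a
  · simp [hb, erase_same]
  · simp [erase_ne hb]

section Bend

variable {S M : Type*} [Semiring S]

lemma bendPairs_le_iff {r : (M →₀ S) → (M →₀ S) → Prop} (hr : Equivalence r) (f : M →₀ S) :
    bendPairs f ≤ r ↔ ∀ a, r f (f.erase a) := by
  refine ⟨fun h a => ?_, ?_⟩
  · by_cases ha : a ∈ f.support
    · exact h _ _ ⟨a, ha, rfl, rfl⟩
    · rw [Finsupp.erase_of_notMem_support ha]
      exact hr.refl f
  · rintro h _ _ ⟨a, -, rfl, rfl⟩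
    exact h a

def bendSubmodule {r : (M →₀ S) → (M →₀ S) → Prop} (hr : IsModCong S (M →₀ S) r) :
    Submodule S (M →₀ S) where
  carrier := {g | ∀ a, r g (g.erase a)}
  zero_mem' a := by
    rw [Finsupp.erase_zero]
    exact hr.1.refl 0
  add_mem' hf hg a := by
    rw [Finsupp.erase_add]
    exact hr.2.1 _ _ _ _ (hf a) (hg a)
  smul_mem' s _ hg a := by
    rw [Finsupp.erase_smul]
    exact hr.2.2 s _ _ (hg a)

lemma bend_of_mem_span {r : (M →₀ S) → (M →₀ S) → Prop} (hr : IsModCong S (M →₀ S) r)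
    {s : Set (M →₀ S)} (hs : ∀ f ∈ s, ∀ a, r f (f.erase a)) {g : M →₀ S}
    (hg : g ∈ Submodule.span S s) (a : M) : r g (g.erase a) :=
  (Submodule.span_le (p := bendSubmodule hr).2 hs) hg a

end Bend

theorem stmt14_general (S M ι : Type*) [CommSemiring S]
    (f : ι → (M →₀ S)) :
    modCongGen S (M →₀ S)
        (fun x y => ∃ g ∈ Submodule.span S (Set.range f), bendPairs g x y) =
      modCongGen S (M →₀ S) (fun x y => ∃ i : ι, bendPairs (f i) x y) := by
  set R := modCongGen S (M →₀ S) (fun x y => ∃ i : ι, bendPairs (f i) x y)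
  have hR : IsModCong S (M →₀ S) R := isModCong_modCongGen _
  apply modCongGen_eq_of_le
  · rintro x y ⟨g, hg, hxy⟩
    refine (bendPairs_le_iff hR.1 g).2 (bend_of_mem_span hR ?_ hg) x y hxy
    rintro _ ⟨i, rfl⟩
    exact (bendPairs_le_iff hR.1 (f i)).1 fun x y h => le_modCongGen _ x y ⟨i, h⟩
  · rintro x y ⟨i, hxy⟩
    exact le_modCongGen _ x y ⟨f i, Submodule.subset_span ⟨i, rfl⟩, hxy⟩

/-- If elements `f i` generate a submodule `N` of the free module `M ⊗ S`, then the
bend congruence of `N` (generated by all bend relations of all elements of `N`)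
equals the module congruence generated by the bend relations of the `f i`. -/
theorem stmt14 (S M ι : Type*) [CommSemiring S] (hidem : ∀ s : S, s + s = s)
    (f : ι → (M →₀ S)) :
    modCongGen S (M →₀ S)
        (fun x y => ∃ g ∈ Submodule.span S (Set.range f), bendPairs g x y) =
      modCongGen S (M →₀ S) (fun x y => ∃ i : ι, bendPairs (f i) x y) :=
  stmt14_general S M ι f
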